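/- arXiv:2110.11691 — 3 statements merged into one kernel-verified Lean document; each statement's English description precedes it below -/
import Mathlib

section
/- Let O(x, ε) be real-analytic near the origin with O(0,0) = 0, and for small ε ≠ 0 set y_ε(x) = √(x² + ε²(1 + O(x, ε))). Let K_ε(x) denote the signed curvature of the graph of y_ε and k_ε(x) = ε²/(ε² + 2x²)^(3/2). Then for every fixed x ≠ 0 in a suitable neighborhood of 0, the quotient K_ε(x)/k_ε(x) converges as ε → 0 to Ψ(x) = 1 + O(x, 0) - x·∂_x O(x, 0) + (x²/2)·∂²_x O(x, 0). -/
/-! For `a(s) = s² + ε²(1 + O(s, ε))` the curvature of `√a` at `x` is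
`2 (2 a a'' - a'²) / (4 a + a'²)^(3/2)`, and `2 a a'' - a'² = ε² N(ε)` with `N` continuous in `ε`
and `N(0) = 4 Ψ(x)`. Dividing by `k_ε` cancels the `ε²`, while `(ε² + 2x²) / (4a + a'²)` tends to
`2x² / 8x² = 1/4`; hence the quotient tends to `2 · 4Ψ(x) · (1/4)^(3/2) = Ψ(x)`. Analyticity of `O`
makes `∂ₛO` and `∂ₛ²O` jointly continuous in `(s, ε)`, which lets the limit `ε → 0` pass through
`a'` and `a''`. -/

open Filter Topology

noncomputable def signedCurvature (y : ℝ → ℝ) (x : ℝ) : ℝ :=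
  deriv (deriv y) x / (1 + deriv y x ^ 2) ^ ((3 : ℝ) / 2)

section PartialFst

variable {𝕜 : Type*} [NontriviallyNormedField 𝕜] {E : Type*} [NormedAddCommGroup E]
  [NormedSpace 𝕜 E] {f : 𝕜 × 𝕜 → E}

noncomputable def partialFst (f : 𝕜 × 𝕜 → E) (p : 𝕜 × 𝕜) : E := fderiv 𝕜 f p (1, 0)

theorem AnalyticAt.partialFst [CompleteSpace E] {p : 𝕜 × 𝕜} (hf : AnalyticAt 𝕜 f p) :
    AnalyticAt 𝕜 (partialFst f) p :=
  ((ContinuousLinearMap.apply 𝕜 E ((1 : 𝕜), (0 : 𝕜))).analyticAt _).comp hf.fderiv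

theorem DifferentiableAt.hasDerivAt_partialFst {s e : 𝕜} (hf : DifferentiableAt 𝕜 f (s, e)) :
    HasDerivAt (fun t => f (t, e)) (partialFst f (s, e)) s :=
  hf.hasFDerivAt.comp_hasDerivAt s ((hasDerivAt_id s).prodMk (hasDerivAt_const s e))

theorem AnalyticAt.eventually_analyticAt_fst [CompleteSpace E] {x e : 𝕜}
    (hf : AnalyticAt 𝕜 f (x, e)) :
    ∀ᶠ s in 𝓝 x, AnalyticAt 𝕜 f (s, e) :=
  (continuous_id.prodMk continuous_const).continuousAt.eventually hf.eventually_analyticAt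

theorem deriv_deriv_eq_partialFst [CompleteSpace E] {x e : 𝕜}
    (hf : AnalyticAt 𝕜 f (x, e)) :
    deriv (deriv fun t => f (t, e)) x = partialFst (partialFst f) (x, e) := by
  have hd : deriv (fun t => f (t, e)) =ᶠ[𝓝 x] fun s => partialFst f (s, e) := by
    filter_upwards [hf.eventually_analyticAt_fst] with s hs
    exact hs.differentiableAt.hasDerivAt_partialFst.deriv
  rw [hd.deriv_eq]
  exact hf.partialFst.differentiableAt.hasDerivAt_partialFst.deriv

end PartialFst

theorem sq_rpow_three_halves {v : ℝ} (hv : 0 ≤ v) : (v ^ 2) ^ ((3 : ℝ) / 2) = v ^ 3 := by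
  rw [← Real.rpow_natCast v 2, ← Real.rpow_mul hv, ← Real.rpow_natCast v 3]
  norm_num

theorem signedCurvature_sqrt {a a' : ℝ → ℝ} {a'' x : ℝ}
    (ha : ∀ᶠ s in 𝓝 x, HasDerivAt a (a' s) s) (ha' : HasDerivAt a' a'' x) (hx : 0 < a x) :
    signedCurvature (fun s => √(a s)) x =
      2 * (2 * a x * a'' - a' x ^ 2) / (4 * a x + a' x ^ 2) ^ ((3 : ℝ) / 2) := by
  have hpos : ∀ᶠ s in 𝓝 x, 0 < a s :=
    ha.self_of_nhds.continuousAt.eventually (lt_mem_nhds hx)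
  have hd : deriv (fun s => √(a s)) =ᶠ[𝓝 x] fun s => a' s / (2 * √(a s)) := by
    filter_upwards [ha, hpos] with s hs hs0
    exact (hs.sqrt hs0.ne').deriv
  have hr : 0 < √(a x) := Real.sqrt_pos.mpr hx
  have hden : HasDerivAt (fun s => 2 * √(a s)) (a' x / √(a x)) x :=
    ((ha.self_of_nhds.sqrt hx.ne').const_mul 2).congr_deriv (by field_simp)
  have hd2 := ha'.fun_div hden (by positivity)
  unfold signedCurvature
  rw [hd.deriv_eq, hd2.deriv, hd.eq_of_nhds]
  set r := √(a x)
  have har : a x = r ^ 2 := (Real.sq_sqrt hx.le).symm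
  have hD : 0 < 4 * r ^ 2 + a' x ^ 2 := by positivity
  have h1 : 1 + (a' x / (2 * r)) ^ 2 = (4 * r ^ 2 + a' x ^ 2) / (2 * r) ^ 2 := by
    field_simp; ring
  rw [h1, Real.div_rpow hD.le (by positivity), sq_rpow_three_halves (by positivity), har]
  have : 0 < (4 * r ^ 2 + a' x ^ 2) ^ ((3 : ℝ) / 2) := by positivity
  field_simp

theorem signedCurvature_sqrt_sq_add_mul {F : ℝ × ℝ → ℝ} {x e : ℝ} (hF : AnalyticAt ℝ F (x, e))
    (hpos : 0 < x ^ 2 + e ^ 2 * (1 + F (x, e))) :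
    signedCurvature (fun s => √(s ^ 2 + e ^ 2 * (1 + F (s, e)))) x =
      2 * (2 * (x ^ 2 + e ^ 2 * (1 + F (x, e))) * (2 + e ^ 2 * partialFst (partialFst F) (x, e)) -
          (2 * x + e ^ 2 * partialFst F (x, e)) ^ 2) /
        (4 * (x ^ 2 + e ^ 2 * (1 + F (x, e))) + (2 * x + e ^ 2 * partialFst F (x, e)) ^ 2)
          ^ ((3 : ℝ) / 2) := by
  have ha : ∀ᶠ s in 𝓝 x, HasDerivAt (fun t => t ^ 2 + e ^ 2 * (1 + F (t, e)))
      (2 * s + e ^ 2 * partialFst F (s, e)) s := by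
    filter_upwards [hF.eventually_analyticAt_fst] with s hs
    exact ((hasDerivAt_pow 2 s).add
      ((hs.differentiableAt.hasDerivAt_partialFst.const_add 1).const_mul (e ^ 2))).congr_deriv
        (by ring)
  have ha' : HasDerivAt (fun t => 2 * t + e ^ 2 * partialFst F (t, e))
      (2 + e ^ 2 * partialFst (partialFst F) (x, e)) x :=
    (((hasDerivAt_id x).const_mul 2).add
      (hF.partialFst.differentiableAt.hasDerivAt_partialFst.const_mul (e ^ 2))).congr_deriv
        (by ring)
  exact signedCurvature_sqrt ha ha' hpos

theorem tendsto_curvature_ratio {p q r : ℝ → ℝ} {x : ℝ} (hx : x ≠ 0) (hp : ContinuousAt p 0)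
    (hq : ContinuousAt q 0) (hr : ContinuousAt r 0) :
    Tendsto (fun e : ℝ =>
        2 * (2 * (x ^ 2 + e ^ 2 * (1 + p e)) * (2 + e ^ 2 * r e) - (2 * x + e ^ 2 * q e) ^ 2) /
          (4 * (x ^ 2 + e ^ 2 * (1 + p e)) + (2 * x + e ^ 2 * q e) ^ 2) ^ ((3 : ℝ) / 2) /
          (e ^ 2 / (e ^ 2 + 2 * x ^ 2) ^ ((3 : ℝ) / 2)))
      (𝓝[≠] 0) (𝓝 (1 + p 0 - x * q 0 + x ^ 2 / 2 * r 0)) := by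
  set D : ℝ → ℝ := fun e => 4 * (x ^ 2 + e ^ 2 * (1 + p e)) + (2 * x + e ^ 2 * q e) ^ 2
  -- `e ^ 2 * N e = 2 (x ^ 2 + e ^ 2 (1 + p e)) (2 + e ^ 2 r e) - (2 x + e ^ 2 q e) ^ 2`
  set N : ℝ → ℝ := fun e =>
    4 * (1 + p e) - 4 * x * q e + 2 * x ^ 2 * r e + e ^ 2 * (2 * (1 + p e) * r e - q e ^ 2)
  have hx2 : 0 < x ^ 2 := by positivity
  have hD : Tendsto D (𝓝 0) (𝓝 (8 * x ^ 2)) := by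
    convert (show ContinuousAt D 0 by fun_prop).tendsto using 2
    simp [D]
    ring
  have hN : Tendsto N (𝓝 0) (𝓝 (4 * (1 + p 0) - 4 * x * q 0 + 2 * x ^ 2 * r 0)) := by
    simpa [N] using (show ContinuousAt N 0 by fun_prop).tendsto
  have hbase : Tendsto (fun e => (e ^ 2 + 2 * x ^ 2) / D e) (𝓝 0) (𝓝 ((1 / 2) ^ 2)) := by
    have hnum : Tendsto (fun e : ℝ => e ^ 2 + 2 * x ^ 2) (𝓝 0) (𝓝 (2 * x ^ 2)) := by
      simpa using (show Continuous fun e : ℝ => e ^ 2 + 2 * x ^ 2 by fun_prop).tendsto 0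
    rw [show ((1 : ℝ) / 2) ^ 2 = 2 * x ^ 2 / (8 * x ^ 2) by field_simp; ring]
    exact hnum.div hD (by positivity)
  have hlim := (hN.const_mul 2).mul (hbase.rpow_const (p := (3 : ℝ) / 2) (Or.inr (by norm_num)))
  rw [sq_rpow_three_halves (by norm_num)] at hlim
  refine ((hlim.mono_left nhdsWithin_le_nhds).congr' ?_).trans (le_of_eq ?_)
  · filter_upwards [self_mem_nhdsWithin,
      nhdsWithin_le_nhds (hD.eventually (lt_mem_nhds (by positivity)))] with e (he : e ≠ 0) hDe
    have ht : 0 < e ^ 2 + 2 * x ^ 2 := by positivity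
    rw [Real.div_rpow ht.le hDe.le]
    have : 0 < D e ^ ((3 : ℝ) / 2) := by positivity
    have : 0 < (e ^ 2 + 2 * x ^ 2) ^ ((3 : ℝ) / 2) := by positivity
    simp only [D, N] at *
    field_simp
    ring
  · congr 1
    ring

theorem curvature_quotient_limit_general (O : ℝ → ℝ → ℝ)
    (hO : AnalyticAt ℝ (fun p : ℝ × ℝ => O p.1 p.2) (0, 0)) :
    ∃ U ∈ nhds (0 : ℝ), ∀ x ∈ U, x ≠ 0 →
      Tendsto (fun ε : ℝ =>
          (deriv (deriv (fun s => Real.sqrt (s ^ 2 + ε ^ 2 * (1 + O s ε)))) x /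
              (1 + (deriv (fun s => Real.sqrt (s ^ 2 + ε ^ 2 * (1 + O s ε))) x) ^ 2)
                ^ ((3 : ℝ) / 2)) /
            (ε ^ 2 / (ε ^ 2 + 2 * x ^ 2) ^ ((3 : ℝ) / 2)))
        (nhdsWithin 0 {0}ᶜ)
        (nhds (1 + O x 0 - x * deriv (fun s => O s 0) x
          + x ^ 2 / 2 * deriv (deriv (fun s => O s 0)) x)) := by
  set F : ℝ × ℝ → ℝ := fun p => O p.1 p.2
  refine ⟨{x | AnalyticAt ℝ F (x, 0)}, hO.eventually_analyticAt_fst,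
    fun x (hx : AnalyticAt ℝ F (x, 0)) hx0 => ?_⟩
  have hF : ∀ᶠ e in 𝓝 (0 : ℝ), AnalyticAt ℝ F (x, e) :=
    (continuous_const.prodMk continuous_id).continuousAt.eventually hx.eventually_analyticAt
  have hcont {g : ℝ × ℝ → ℝ} (hg : AnalyticAt ℝ g (x, 0)) : ContinuousAt (fun e => g (x, e)) 0 :=
    hg.continuousAt.comp (continuous_const.prodMk continuous_id).continuousAt
  have hlim := tendsto_curvature_ratio hx0 (hcont hx) (hcont hx.partialFst)
    (hcont hx.partialFst.partialFst)
  rw [hx.differentiableAt.hasDerivAt_partialFst.deriv, deriv_deriv_eq_partialFst hx]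
  have hA : ∀ᶠ e in 𝓝 (0 : ℝ), 0 < x ^ 2 + e ^ 2 * (1 + F (x, e)) := by
    have hFx := hcont hx
    have : ContinuousAt (fun e => x ^ 2 + e ^ 2 * (1 + F (x, e))) 0 := by fun_prop
    exact this.eventually (lt_mem_nhds (by simpa using sq_pos_of_ne_zero hx0))
  refine hlim.congr' ?_
  filter_upwards [nhdsWithin_le_nhds (hF.and hA)] with e ⟨hFe, hAe⟩
  exact congrArg (· / (e ^ 2 / (e ^ 2 + 2 * x ^ 2) ^ ((3 : ℝ) / 2)))
    (signedCurvature_sqrt_sq_add_mul hFe hAe).symm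

/-- Let O(x, ε) be real-analytic near the origin with O(0,0) = 0 and 1 + O > 0 nearby.
For y_ε(x) = √(x² + ε²(1 + O(x, ε))) with signed curvature K_ε, and
k_ε(x) = ε²/(ε² + 2x²)^(3/2), for every fixed x ≠ 0 in a suitable neighborhood of 0 the
quotient K_ε(x)/k_ε(x) tends, as ε → 0, to
Ψ(x) = 1 + O(x,0) - x·∂ₓO(x,0) + (x²/2)·∂ₓ²O(x,0). -/
theorem curvature_quotient_limit (O : ℝ → ℝ → ℝ)
    (hO : AnalyticAt ℝ (fun p : ℝ × ℝ => O p.1 p.2) (0, 0))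
    (hO0 : O 0 0 = 0)
    (hpos : ∀ᶠ p : ℝ × ℝ in nhds (0, 0), 0 < 1 + O p.1 p.2) :
    ∃ U ∈ nhds (0 : ℝ), ∀ x ∈ U, x ≠ 0 →
      Tendsto (fun ε : ℝ =>
          (deriv (deriv (fun s => Real.sqrt (s ^ 2 + ε ^ 2 * (1 + O s ε)))) x /
              (1 + (deriv (fun s => Real.sqrt (s ^ 2 + ε ^ 2 * (1 + O s ε))) x) ^ 2)
                ^ ((3 : ℝ) / 2)) /
            (ε ^ 2 / (ε ^ 2 + 2 * x ^ 2) ^ ((3 : ℝ) / 2)))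
        (nhdsWithin 0 {0}ᶜ)
        (nhds (1 + O x 0 - x * deriv (fun s => O s 0) x
          + x ^ 2 / 2 * deriv (deriv (fun s => O s 0)) x)) :=
  curvature_quotient_limit_general O hO
end

section
/- The function κ(x, ε) = (4ε² + 8x² + 4ε²·O + 4ε²x·O' + ε⁴·(O')²)/(ε² + 2x²), where O = O(x, ε) is real-analytic near the origin with O(0,0) = 0 and O' = ∂_x O, has limit 4 as (x, ε) → (0, 0) with (x, ε) ≠ (0, 0). -/
/-!
Off the origin, κ = 4 + (4O + 4x O' + ε² O'²) · ε²/(ε² + 2x²). The ratio ε²/(ε² + 2x²) lies in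
[0, 1], and the first factor tends to 4·O(0,0) = 0 because an analytic function is C¹, so both
O and ∂ₓO are continuous at the origin.
-/

open Filter Topology

section PartialDerivative

variable {𝕜 E : Type*} [NontriviallyNormedField 𝕜] [NormedAddCommGroup E] [NormedSpace 𝕜 E]
  {F : 𝕜 × 𝕜 → E} {p : 𝕜 × 𝕜}

theorem DifferentiableAt.hasDerivAt_fst_partial (hF : DifferentiableAt 𝕜 F p) :
    HasDerivAt (fun s => F (s, p.2)) (fderiv 𝕜 F p (1, 0)) p.1 :=
  hF.hasFDerivAt.comp_hasDerivAt p.1 ((hasDerivAt_id p.1).prodMk (hasDerivAt_const p.1 p.2))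

theorem AnalyticAt.continuousAt_deriv_fst_partial [CompleteSpace E] (hF : AnalyticAt 𝕜 F p) :
    ContinuousAt (fun q : 𝕜 × 𝕜 => deriv (fun s => F (s, q.2)) q.1) p := by
  have hfderiv : ContinuousAt (fun q => fderiv 𝕜 F q (1, 0)) p :=
    (ContinuousLinearMap.apply 𝕜 E ((1 : 𝕜), (0 : 𝕜))).continuous.continuousAt.comp
      hF.fderiv.continuousAt
  refine hfderiv.congr ?_
  filter_upwards [hF.eventually_analyticAt] with q hq
  exact (hq.differentiableAt.hasDerivAt_fst_partial).deriv.symm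

end PartialDerivative

/-- κ at `(x, ε)`, where `o` and `d` stand for the values of `O` and `∂ₓO` there. -/
noncomputable def kappa (x ε o d : ℝ) : ℝ :=
  (4 * ε ^ 2 + 8 * x ^ 2 + 4 * ε ^ 2 * o + 4 * ε ^ 2 * x * d + ε ^ 4 * d ^ 2) / (ε ^ 2 + 2 * x ^ 2)

theorem sq_add_two_mul_sq_ne_zero {x ε : ℝ} (h : (x, ε) ≠ (0, 0)) : ε ^ 2 + 2 * x ^ 2 ≠ 0 := by
  contrapose! h
  have hx : x = 0 := by nlinarith [sq_nonneg x, sq_nonneg ε]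
  have hε : ε = 0 := by nlinarith [sq_nonneg x, sq_nonneg ε]
  rw [hx, hε]

theorem kappa_eq_four_add {x ε : ℝ} (h : (x, ε) ≠ (0, 0)) (o d : ℝ) :
    kappa x ε o d = 4 + (4 * o + 4 * x * d + ε ^ 2 * d ^ 2) * (ε ^ 2 / (ε ^ 2 + 2 * x ^ 2)) := by
  rw [kappa, mul_div_assoc', add_div' _ _ _ (sq_add_two_mul_sq_ne_zero h)]
  ring

theorem abs_sq_div_sq_add_two_mul_sq_le_one (x ε : ℝ) : |ε ^ 2 / (ε ^ 2 + 2 * x ^ 2)| ≤ 1 := by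
  rw [abs_of_nonneg (by positivity)]
  exact div_le_one_of_le₀ (by nlinarith [sq_nonneg x]) (by positivity)

/-- The function κ(x, ε) = (4ε² + 8x² + 4ε²·O + 4ε²x·O' + ε⁴·(O')²)/(ε² + 2x²), where O
is real-analytic near the origin with O(0,0) = 0 and O' = ∂ₓO, tends to 4 as
(x, ε) → (0,0), (x, ε) ≠ (0,0). -/
theorem kappa_limit_four (O : ℝ → ℝ → ℝ)
    (hO : AnalyticAt ℝ (fun p : ℝ × ℝ => O p.1 p.2) (0, 0))
    (hO0 : O 0 0 = 0) :
    Tendsto (fun p : ℝ × ℝ =>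
        (4 * p.2 ^ 2 + 8 * p.1 ^ 2 + 4 * p.2 ^ 2 * O p.1 p.2
          + 4 * p.2 ^ 2 * p.1 * deriv (fun s => O s p.2) p.1
          + p.2 ^ 4 * (deriv (fun s => O s p.2) p.1) ^ 2) / (p.2 ^ 2 + 2 * p.1 ^ 2))
      (nhdsWithin (0, 0) {(0, 0)}ᶜ) (nhds 4) := by
  set D : ℝ × ℝ → ℝ := fun p => deriv (fun s => O s p.2) p.1
  have hD : ContinuousAt D (0, 0) := hO.continuousAt_deriv_fst_partial
  have hrest : Tendsto (fun p : ℝ × ℝ => 4 * O p.1 p.2 + 4 * p.1 * D p + p.2 ^ 2 * D p ^ 2)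
      (𝓝[≠] (0, 0)) (𝓝 0) := by
    have hOc : ContinuousAt (fun p : ℝ × ℝ => O p.1 p.2) (0, 0) := hO.continuousAt
    have hcont : ContinuousAt
        (fun p : ℝ × ℝ => 4 * O p.1 p.2 + 4 * p.1 * D p + p.2 ^ 2 * D p ^ 2) (0, 0) := by
      fun_prop
    simpa [hO0] using hcont.tendsto.mono_left nhdsWithin_le_nhds
  have hprod := hrest.zero_mul_isBoundedUnder_le
    (isBoundedUnder_of ⟨1, fun p : ℝ × ℝ => abs_sq_div_sq_add_two_mul_sq_le_one p.1 p.2⟩)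
  refine (by simpa using tendsto_const_nhds.add hprod : Tendsto _ _ (𝓝 (4 : ℝ))).congr' ?_
  filter_upwards [self_mem_nhdsWithin] with p hp
  exact (kappa_eq_four_add hp _ _).symm
end

section
/- For the cuspidal cubic (cissoid) (x² + y²)x = 4y², the evolute satisfies 27Y⁴ + 4608Y² + 32768X = 0: concretely, if (x, y) lies on the cissoid with y ≠ 0 and the curvature center (X, Y) is computed by the standard implicit formulas, then 27Y⁴ + 4608Y² + 32768X = 0. -/
set_option maxRecDepth 10000
set_option maxHeartbeats 1000000

private lemma dfx (y s : ℝ) :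
    deriv (fun s' : ℝ => (s' ^ 2 + y ^ 2) * s' - 4 * y ^ 2) s = 3 * s ^ 2 + y ^ 2 := by
  have h : HasDerivAt (fun s' : ℝ => (s' ^ 2 + y ^ 2) * s' - 4 * y ^ 2)
      ((↑2 * s ^ (2 - 1)) * s + (s ^ 2 + y ^ 2) * 1) s :=
    (((hasDerivAt_pow 2 s).add_const (y ^ 2)).mul (hasDerivAt_id' s)).sub_const (4 * y ^ 2)
  rw [h.deriv]; norm_num; ring

private lemma dfy (x s : ℝ) :
    deriv (fun s' : ℝ => (x ^ 2 + s' ^ 2) * x - 4 * s' ^ 2) s = 2 * x * s - 8 * s := by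
  have h : HasDerivAt (fun s' : ℝ => (x ^ 2 + s' ^ 2) * x - 4 * s' ^ 2)
      ((↑2 * s ^ (2 - 1)) * x - 4 * (↑2 * s ^ (2 - 1))) s :=
    (((hasDerivAt_pow 2 s).const_add (x ^ 2)).mul_const x).sub
      ((hasDerivAt_pow 2 s).const_mul 4)
  rw [h.deriv]; norm_num; ring

/-- For the cissoid (x² + y²)x = 4y²: if (x,y) lies on the curve with y ≠ 0 and the
center of curvature (X, Y) is computed by the standard implicit formulas (with nonzero
denominator), then 27Y⁴ + 4608Y² + 32768X = 0. -/
theorem cissoid_evolute (x y : ℝ)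
    (hcurve : (x ^ 2 + y ^ 2) * x - 4 * y ^ 2 = 0) (hy : y ≠ 0) :
    let f : ℝ → ℝ → ℝ := fun x y => (x ^ 2 + y ^ 2) * x - 4 * y ^ 2
    let fx : ℝ := deriv (fun s => f s y) x
    let fy : ℝ := deriv (fun s => f x s) y
    let fxx : ℝ := deriv (fun s => deriv (fun s' => f s' y) s) x
    let fyy : ℝ := deriv (fun s => deriv (fun s' => f x s') s) y
    let fxy : ℝ := deriv (fun s => deriv (fun s' => f s' s) x) y
    let D : ℝ := 2 * fx * fy * fxy - fy ^ 2 * fxx - fx ^ 2 * fyy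
    let X : ℝ := x + fx * (fx ^ 2 + fy ^ 2) / D
    let Y : ℝ := y + fy * (fx ^ 2 + fy ^ 2) / D
    D ≠ 0 → 27 * Y ^ 4 + 4608 * Y ^ 2 + 32768 * X = 0 := by
  intro f fx fy fxx fyy fxy D X Y hD
  have hfx : fx = 3 * x ^ 2 + y ^ 2 := dfx y x
  have hfy : fy = 2 * x * y - 8 * y := dfy x y
  have hfxx : fxx = 6 * x := by
    show deriv (fun s => deriv (fun s' => (s' ^ 2 + y ^ 2) * s' - 4 * y ^ 2) s) x = _
    have h1 : (fun s : ℝ => deriv (fun s' => (s' ^ 2 + y ^ 2) * s' - 4 * y ^ 2) s)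
        = fun s : ℝ => 3 * s ^ 2 + y ^ 2 := funext fun s => dfx y s
    rw [h1]
    have h : HasDerivAt (fun s : ℝ => 3 * s ^ 2 + y ^ 2)
        (3 * (↑2 * x ^ (2 - 1))) x := ((hasDerivAt_pow 2 x).const_mul 3).add_const (y ^ 2)
    rw [h.deriv]; norm_num; ring
  have hfyy : fyy = 2 * x - 8 := by
    show deriv (fun s => deriv (fun s' => (x ^ 2 + s' ^ 2) * x - 4 * s' ^ 2) s) y = _
    have h1 : (fun s : ℝ => deriv (fun s' => (x ^ 2 + s' ^ 2) * x - 4 * s' ^ 2) s)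
        = fun s : ℝ => (2 * x - 8) * s := funext fun s => (dfy x s).trans (by ring)
    rw [h1]
    have h : HasDerivAt (fun s : ℝ => (2 * x - 8) * s) ((2 * x - 8) * 1) y :=
      (hasDerivAt_id' y).const_mul (2 * x - 8)
    rw [h.deriv]; ring
  have hfxy : fxy = 2 * y := by
    show deriv (fun s => deriv (fun s' => (s' ^ 2 + s ^ 2) * s' - 4 * s ^ 2) x) y = _
    have h1 : (fun s : ℝ => deriv (fun s' => (s' ^ 2 + s ^ 2) * s' - 4 * s ^ 2) x)
        = fun s : ℝ => 3 * x ^ 2 + s ^ 2 := funext fun s => dfx s x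
    rw [h1]
    have h : HasDerivAt (fun s : ℝ => 3 * x ^ 2 + s ^ 2) (↑2 * y ^ (2 - 1)) y :=
      (hasDerivAt_pow 2 y).const_add (3 * x ^ 2)
    rw [h.deriv]; norm_num
  have hX : X = x + fx * (fx ^ 2 + fy ^ 2) / D := rfl
  have hY : Y = y + fy * (fx ^ 2 + fy ^ 2) / D := rfl
  have hDdef : D = 2 * fx * fy * fxy - fy ^ 2 * fxx - fx ^ 2 * fyy := rfl
  rw [hX, hY]
  rw [hDdef, hfx, hfy, hfxx, hfyy, hfxy] at hD ⊢
  set A : ℝ := 3 * x ^ 2 + y ^ 2 with hA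
  set B : ℝ := 2 * x * y - 8 * y with hB
  set S : ℝ := A ^ 2 + B ^ 2 with hS
  set d : ℝ := 2 * A * B * (2 * y) - B ^ 2 * (6 * x) - A ^ 2 * (2 * x - 8) with hd
  have key : 27 * (y * d + B * S) ^ 4 + 4608 * (y * d + B * S) ^ 2 * d ^ 2
      + 32768 * (x * d + A * S) * d ^ 3 = 0 := by
    rw [hd, hS, hA, hB]
    linear_combination ((-1719926784)*x^18 + (6879707136)*x^17 + (-6879707136)*x^16*y^2 + (82556485632)*x^16 + (80263249920)*x^15*y^2 + (-550376570880)*x^15 + (-7644119040)*x^14*y^4 + (-100902371328)*x^14*y^2 + (880602513408)*x^14 + (95551488)*x^13*y^6 + (173521502208)*x^13*y^4 + (-2091430969344)*x^13*y^2 + (-509607936)*x^12*y^6 + (-1204713160704)*x^12*y^4 + (9833394733056)*x^12*y^2 + (222953472)*x^11*y^8 + (80772857856)*x^11*y^6 + (1736743845888)*x^11*y^4 + (-12915503529984)*x^11*y^2 + (509607936)*x^10*y^8 + (-1378999074816)*x^10*y^6 + (13111192977408)*x^10*y^4 + (110592)*x^9*y^12 + (106168320)*x^9*y^10 + (-46289387520)*x^9*y^8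 + (8365723877376)*x^9*y^6 + (-54988734726144)*x^9*y^4 + (-2859466752)*x^8*y^10 + (104639496192)*x^8*y^8 + (-18492652781568)*x^8*y^6 + (61055107596288)*x^8*y^4 + (331776)*x^7*y^14 + (-63700992)*x^7*y^12 + (-311427072)*x^7*y^10 + (2792651489280)*x^7*y^8 + (-8806025134080)*x^7*y^6 + (-1327104)*x^6*y^14 + (-452984832)*x^6*y^12 + (309275394048)*x^6*y^10 + (-20971385782272)*x^6*y^8 + (87407953182720)*x^6*y^6 + (331776)*x^5*y^16 + (-31850496)*x^5*y^14 + (19450036224)*x^5*y^12 + (-2221890600960)*x^5*y^10 + (58511144779776)*x^5*y^8 + (-83494164234240)*x^5*y^6 + (-2654208)*x^4*y^16 + (792723456)*x^4*y^14 + (-143369699328)*x^4*y^12 + (5963092328448)*x^4*y^10 + (-72535555178496)*x^4*y^8 + (110592)*x^3*y^18 + (15925248)*x^3*y^16 + (-6483345408)*x^3*y^14 + (379601289216)*x^3*y^12 + (-5674993975296)*x^3*y^10 + (51835960295424)*x^3*y^8 + (-1327104)*x^2*y^18 + (-148635648)*x^2*y^16 + (20044578816)*x^2*y^14 + (-195689447424)*x^2*y^12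 + (2058363076608)*x^2*y^10 + (-44530220924928)*x^2*y^8 + (5308416)*x^1*y^18 + (679477248)*x^1*y^16 + (-12683575296)*x^1*y^14 + (-304405807104)*x^1*y^12 + (-5682241732608)*x^1*y^10 + (-7077888)*y^18 + (-1019215872)*y^16 + (-25367150592)*y^14 + (-289910292480)*y^12 + (-463856467968)*y^10) * hcurve
  have expand : (27 * (y + B * S / d) ^ 4 + 4608 * (y + B * S / d) ^ 2
        + 32768 * (x + A * S / d)) * d ^ 4
      = 27 * (y * d + B * S) ^ 4 + 4608 * (y * d + B * S) ^ 2 * d ^ 2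
        + 32768 * (x * d + A * S) * d ^ 3 := by
    field_simp
  have hz := expand.trans key
  exact (mul_eq_zero.mp hz).resolve_right (pow_ne_zero 4 hD)
end
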